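/- For every source vertex s ∈ V there exists a spanning tree T of G (hence a subgraph with exactly n−1 edges) such that σ_T(s,t) ≤ 3·σ_G(s,t) for every vertex t ∈ V, i.e., a single-source group Steiner tree spanner with source s and stretch 3. -/

import Mathlib

/-!
Let `H₀` be a minimum-weight subgraph of `G` in which `s` reaches every group, chosen minimal
under inclusion; then `H₀` is acyclic and all its edges lie in the component of `s`. Grow `H₀`
into a spanning tree `T` by Dijkstra's algorithm with the whole component of `s` as source, so
that every `t` is joined in `T` to some vertex `z` of that component by a walk no longer than
the distance `d(H₀, t)` in `G`. If `p` is a group Steiner walk from `s` to `t` in `G`, its edges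
form a subgraph in which `s` reaches every group, so `w(H₀) ≤ w(p)`, and `d(H₀, t) ≤ w(p)`.
A tour of the tree `H₀` from `s` ending at `z` traverses each edge at most twice, hence visits
every group at cost at most `2 w(H₀)`; continuing along `T` to `t` gives a group Steiner walk in
`T` of length at most `3 w(p)`.
-/

open SimpleGraph ENNReal

/-- The length (total weight) of a walk: the sum of its edge weights, with multiplicity. -/
def walkWeight {V : Type*} {G : SimpleGraph V} (w : V → V → ℝ) {u v : V} (p : G.Walk u v) : ℝ :=
  (p.darts.map (fun d => w d.toProd.1 d.toProd.2)).sum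

/-- A walk is a group Steiner path w.r.t. the groups `R` if it visits at least one
vertex of every group. -/
def IsGroupSteiner {V : Type*} {G : SimpleGraph V} {k : ℕ} (R : Fin k → Set V) {u v : V}
    (p : G.Walk u v) : Prop :=
  ∀ i, ∃ x ∈ R i, x ∈ p.support

/-- The group Steiner distance: the infimum of the lengths of group Steiner paths
from `s` to `t` (`∞` if there is none). -/
noncomputable def gsDist {V : Type*} (G : SimpleGraph V) (w : V → V → ℝ) {k : ℕ}
    (R : Fin k → Set V) (s t : V) : ℝ≥0∞ :=
  ⨅ p : {p : G.Walk s t // IsGroupSteiner R p}, ENNReal.ofReal (walkWeight w p.1)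

/-- The ordinary shortest-path distance: the infimum of the lengths of walks
from `s` to `t` (`∞` if there is none). -/
noncomputable def spDist {V : Type*} (G : SimpleGraph V) (w : V → V → ℝ) (s t : V) : ℝ≥0∞ :=
  ⨅ p : G.Walk s t, ENNReal.ofReal (walkWeight w p)

open scoped NNReal

section walkWeight

variable {V : Type*} {G G' : SimpleGraph V} (w : V → V → ℝ)

@[simp] lemma walkWeight_nil {u : V} : walkWeight w (Walk.nil : G.Walk u u) = 0 := rfl

@[simp] lemma walkWeight_cons {u v x : V} (h : G.Adj u v) (p : G.Walk v x) :
    walkWeight w (Walk.cons h p) = w u v + walkWeight w p := by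
  simp [walkWeight]

@[simp] lemma walkWeight_append {u v x : V} (p : G.Walk u v) (q : G.Walk v x) :
    walkWeight w (p.append q) = walkWeight w p + walkWeight w q := by
  simp [walkWeight]

@[simp] lemma walkWeight_concat {u v x : V} (p : G.Walk u v) (h : G.Adj v x) :
    walkWeight w (p.concat h) = walkWeight w p + w v x := by
  simp [Walk.concat_eq_append]

@[simp] lemma walkWeight_transfer {u v : V} (p : G.Walk u v) (hp : ∀ e ∈ p.edges, e ∈ G'.edgeSet) :
    walkWeight w (p.transfer G' hp) = walkWeight w p := by
  induction p with
  | nil => rfl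
  | cons h p ih => exact (walkWeight_cons w _ _).trans (by rw [ih, walkWeight_cons])

@[simp] lemma walkWeight_mapLe (h : G ≤ G') {u v : V} (p : G.Walk u v) :
    walkWeight w (p.mapLe h) = walkWeight w p := by
  induction p <;> simp [*]

lemma walkWeight_nonneg (hw : ∀ u v, 0 ≤ w u v) {u v : V} (p : G.Walk u v) :
    0 ≤ walkWeight w p := by
  induction p with
  | nil => simp
  | cons h p ih => simpa using add_nonneg (hw _ _) ih

end walkWeight

section graphWeight

variable {V : Type*} {w : V → V → ℝ} (hsymm : ∀ u v, w u v = w v u)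

noncomputable def edgeWeight (w : V → V → ℝ) (hsymm : ∀ u v, w u v = w v u) : Sym2 V → ℝ :=
  Sym2.lift ⟨w, hsymm⟩

@[simp] lemma edgeWeight_mk (u v : V) : edgeWeight w hsymm s(u, v) = w u v := rfl

lemma edgeWeight_nonneg (hw : ∀ u v, 0 ≤ w u v) (e : Sym2 V) : 0 ≤ edgeWeight w hsymm e := by
  induction e with
  | _ u v => exact hw u v

lemma walkWeight_eq_sum_edges {G : SimpleGraph V} {u v : V} (p : G.Walk u v) :
    walkWeight w p = (p.edges.map (edgeWeight w hsymm)).sum := by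
  induction p <;> simp [*]

variable [Finite V]

noncomputable def graphWeight (w : V → V → ℝ) (hsymm : ∀ u v, w u v = w v u)
    (H : SimpleGraph V) : ℝ :=
  ∑ e ∈ H.edgeSet.toFinite.toFinset, edgeWeight w hsymm e

lemma graphWeight_mono (hw : ∀ u v, 0 ≤ w u v) {H K : SimpleGraph V} (h : H ≤ K) :
    graphWeight w hsymm H ≤ graphWeight w hsymm K :=
  Finset.sum_le_sum_of_subset_of_nonneg (Set.Finite.toFinset_mono (edgeSet_mono h))
    fun e _ _ => edgeWeight_nonneg hsymm hw e

lemma graphWeight_deleteEdges_add {H : SimpleGraph V} {e : Sym2 V} (he : e ∈ H.edgeSet) :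
    graphWeight w hsymm (H.deleteEdges {e}) + edgeWeight w hsymm e = graphWeight w hsymm H := by
  classical
  rw [graphWeight, graphWeight, add_comm,
    ← Finset.add_sum_erase _ _ (H.edgeSet.toFinite.mem_toFinset.2 he)]
  congr 2
  ext
  simp [and_comm]

lemma SimpleGraph.Walk.IsTrail.walkWeight_le_graphWeight (hw : ∀ u v, 0 ≤ w u v) {H : SimpleGraph V}
    {u v : V} {p : H.Walk u v} (hp : p.IsTrail) : walkWeight w p ≤ graphWeight w hsymm H := by
  classical
  rw [walkWeight_eq_sum_edges hsymm, ← List.sum_toFinset _ hp.edges_nodup]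
  exact Finset.sum_le_sum_of_subset_of_nonneg
    (fun e he => by simpa using p.edges_subset_edgeSet (List.mem_toFinset.1 he))
    fun e _ _ => edgeWeight_nonneg hsymm hw e

lemma graphWeight_fromEdgeSet_le (hw : ∀ u v, 0 ≤ w u v) {G : SimpleGraph V} {u v : V}
    (p : G.Walk u v) : graphWeight w hsymm (fromEdgeSet p.edgeSet) ≤ walkWeight w p := by
  classical
  calc graphWeight w hsymm (fromEdgeSet p.edgeSet)
      ≤ ∑ e ∈ p.edges.dedup.toFinset, edgeWeight w hsymm e :=
        Finset.sum_le_sum_of_subset_of_nonneg (fun e he => by simp_all [Walk.edgeSet])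
          fun e _ _ => edgeWeight_nonneg hsymm hw e
    _ = (p.edges.dedup.map (edgeWeight w hsymm)).sum := List.sum_toFinset _ (List.nodup_dedup _)
    _ ≤ walkWeight w p := by
        rw [walkWeight_eq_sum_edges hsymm]
        exact ((List.dedup_sublist _).map _).sum_le_sum fun x hx => by
          obtain ⟨e, -, rfl⟩ := List.mem_map.1 hx
          exact edgeWeight_nonneg hsymm hw e

end graphWeight

lemma SimpleGraph.Walk.reachable_of_mem_support {V : Type*} {G : SimpleGraph V} {u v x : V}
    (p : G.Walk u v) (hx : x ∈ p.support) : G.Reachable u x := by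
  classical
  exact (p.takeUntil x hx).reachable

lemma SimpleGraph.reachable_deleteEdges_of_not_isBridge {V : Type*} {H : SimpleGraph V} {u v : V}
    (h : ¬H.IsBridge s(u, v)) {a b : V} (hab : H.Reachable a b) :
    (H.deleteEdges {s(u, v)}).Reachable a b := by
  rw [isBridge_iff, not_not] at h
  obtain ⟨p⟩ := hab
  induction p with
  | nil => rfl
  | @cons a c b hac p ih =>
    refine Reachable.trans ?_ ih
    by_cases he : s(a, c) = s(u, v)
    · rcases Sym2.eq_iff.1 he with ⟨rfl, rfl⟩ | ⟨rfl, rfl⟩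
      exacts [h, h.symm]
    · exact Adj.reachable ((deleteEdges_adj ..).2 ⟨hac, by simpa using he⟩)

section steiner

variable {V : Type*} {k : ℕ} (R : Fin k → Set V) (s : V)

def ReachesGroups (H : SimpleGraph V) : Prop :=
  ∀ i, ∃ x ∈ R i, H.Reachable s x

variable {R s}

lemma SimpleGraph.Connected.reachesGroups {G : SimpleGraph V} (hG : G.Connected)
    (hR : ∀ i, (R i).Nonempty) : ReachesGroups R s G :=
  fun i => (hR i).imp fun x hx => ⟨hx, hG.preconnected s x⟩

lemma IsGroupSteiner.reachesGroups {G : SimpleGraph V} {t : V} {p : G.Walk s t}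
    (hp : IsGroupSteiner R p) : ReachesGroups R s G :=
  fun i => (hp i).imp fun _ ⟨hx, hxp⟩ => ⟨hx, p.reachable_of_mem_support hxp⟩

lemma exists_minimal_reachesGroups [Finite V] {w : V → V → ℝ} (hw : ∀ u v, 0 ≤ w u v)
    (hsymm : ∀ u v, w u v = w v u) {G : SimpleGraph V} (hG : ReachesGroups R s G) :
    ∃ H₀ ≤ G, Minimal (ReachesGroups R s) H₀ ∧
      ∀ H ≤ G, ReachesGroups R s H → graphWeight w hsymm H₀ ≤ graphWeight w hsymm H := by
  obtain ⟨H₁, hH₁, hmin⟩ := Set.exists_min_image {H | H ≤ G ∧ ReachesGroups R s H}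
    (graphWeight w hsymm) (Set.toFinite _) ⟨G, le_rfl, hG⟩
  obtain ⟨H₀, ⟨⟨hH₀G, hH₀⟩, hH₀w⟩, hH₀min⟩ := (Set.toFinite {H | (H ≤ G ∧ ReachesGroups R s H) ∧
    graphWeight w hsymm H ≤ graphWeight w hsymm H₁}).exists_minimal ⟨H₁, hH₁, le_rfl⟩
  refine ⟨H₀, hH₀G, ⟨hH₀, fun H hH hle => hH₀min ⟨⟨hle.trans hH₀G, hH⟩,
    (graphWeight_mono hsymm hw hle).trans hH₀w⟩ hle⟩, fun H hHG hH => hH₀w.trans (hmin H ⟨hHG, hH⟩)⟩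

variable {H : SimpleGraph V}

lemma exists_not_reachable_deleteEdges_of_minimal (hH : Minimal (ReachesGroups R s) H) {u v : V}
    (huv : H.Adj u v) : ∃ x, H.Reachable s x ∧ ¬(H.deleteEdges {s(u, v)}).Reachable s x := by
  by_contra! h
  have hdel := hH.eq_of_le (fun i => (hH.prop i).imp fun x ⟨hx, hr⟩ => ⟨hx, h x hr⟩)
    (deleteEdges_le _)
  have := hdel ▸ huv
  simp at this

lemma isAcyclic_of_minimal_reachesGroups (hH : Minimal (ReachesGroups R s) H) : H.IsAcyclic :=
  isAcyclic_iff_forall_adj_isBridge.2 fun _ _ huv => by_contra fun hb =>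
    have ⟨_, hx, hx'⟩ := exists_not_reachable_deleteEdges_of_minimal hH huv
    hx' (reachable_deleteEdges_of_not_isBridge hb hx)

lemma reachable_of_adj_of_minimal_reachesGroups (hH : Minimal (ReachesGroups R s) H) {u v : V}
    (huv : H.Adj u v) : H.Reachable s u := by
  by_contra hu
  obtain ⟨x, ⟨p⟩, hx⟩ := exists_not_reachable_deleteEdges_of_minimal hH huv
  exact hx (reachable_deleteEdges_iff_exists_walk.2
    ⟨p, fun he => hu (p.reachable_of_mem_support (p.fst_mem_support_of_mem_edges he))⟩)

end steiner

section cover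

variable {V : Type*} {H : SimpleGraph V}

lemma SimpleGraph.Walk.exists_detour (w : V → V → ℝ) {a b y u : V} (q : H.Walk a b)
    (hy : y ∈ q.support) (hyu : H.Adj y u) :
    ∃ q' : H.Walk a b, (∀ x ∈ q.support, x ∈ q'.support) ∧ u ∈ q'.support ∧
      walkWeight w q' = walkWeight w q + w y u + w u y := by
  classical
  refine ⟨(q.takeUntil y hy).append ((cons hyu (cons hyu.symm nil)).append (q.dropUntil y hy)),
    fun x hx => ?_, by simp, ?_⟩
  · rw [← q.take_spec hy, mem_support_append_iff] at hx
    simp only [mem_support_append_iff]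
    tauto
  · conv_rhs => rw [← q.take_spec hy]
    simp only [walkWeight_append, walkWeight_cons, walkWeight_nil]
    ring

lemma SimpleGraph.reachable_deleteEdges_of_forall_adj_eq {u y : V}
    (hleaf : ∀ v, H.Adj u v → v = y) {a x : V} (hax : H.Reachable a x) (ha : a ≠ u)
    (hx : x ≠ u) : (H.deleteEdges {s(y, u)}).Reachable a x := by
  obtain ⟨p⟩ := hax
  -- a walk through the leaf `u` enters and leaves it through `y`
  suffices ∀ {a x} (p : H.Walk a x), x ≠ u →
      (a ≠ u → (H.deleteEdges {s(y, u)}).Reachable a x) ∧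
        (a = u → (H.deleteEdges {s(y, u)}).Reachable y x) from (this p hx).1 ha
  intro a x p hx
  induction p with
  | nil => exact ⟨fun _ => .rfl, fun h => absurd h hx⟩
  | @cons a c x hac p ih =>
    obtain ⟨ih₁, ih₂⟩ := ih hx
    refine ⟨fun ha => ?_, ?_⟩
    · by_cases hc : c = u
      · subst hc
        exact hleaf a hac.symm ▸ ih₂ rfl
      · refine Reachable.trans (Adj.reachable ((deleteEdges_adj ..).2 ⟨hac, ?_⟩)) (ih₁ hc)
        simp only [Set.mem_singleton_iff, Sym2.eq_iff]
        tauto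
    · rintro rfl
      obtain rfl := hleaf c hac
      exact ih₁ hac.ne.symm

lemma SimpleGraph.IsAcyclic.exists_leaf_notMem_support [Finite V] (hH : H.IsAcyclic) {s z : V}
    {p : H.Walk s z} (hp : p.IsPath) {x : V} (hx : H.Reachable s x) (hxp : x ∉ p.support) :
    ∃ u y, H.Reachable s u ∧ u ∉ p.support ∧ H.Adj y u ∧ ∀ v, H.Adj u v → v = y := by
  classical
  -- a vertex off `p` farthest from `s` is a leaf: any second neighbour would lie farther out
  -- or, by uniqueness of paths, put it on `p`
  obtain ⟨u, ⟨hu, hup⟩, hmax⟩ := Set.exists_max_image {x | H.Reachable s x ∧ x ∉ p.support}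
    (H.dist s) (Set.toFinite _) ⟨x, hx, hxp⟩
  obtain ⟨q, hq, hql⟩ := hu.exists_path_of_dist
  have hnil : ¬q.Nil := fun h => hup (h.eq ▸ p.start_mem_support)
  refine ⟨u, q.penultimate, hu, hup, q.adj_penultimate hnil, fun v huv => ?_⟩
  by_cases hvq : v ∈ q.support
  · exact hH.eq_penultimate_of_adj_end hq huv hvq
  have hqv : (q.concat huv).IsPath := hq.concat hvq huv
  have huniq : ∀ r : H.Walk s v, r.IsPath → r = q.concat huv := fun r hr =>
    congrArg Subtype.val ((hH.subsingleton_path s v).elim ⟨r, hr⟩ ⟨_, hqv⟩)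
  by_cases hvp : v ∈ p.support
  · refine absurd (p.support_takeUntil_subset_support hvp ?_) hup
    rw [huniq _ (hp.takeUntil hvp)]
    simp
  · obtain ⟨r, hr, hrl⟩ := (hu.trans huv.reachable).exists_path_of_dist
    have := hmax v ⟨hu.trans huv.reachable, hvp⟩
    rw [← hrl, ← hql, huniq r hr, Walk.length_concat] at this
    omega

theorem SimpleGraph.IsAcyclic.exists_walk_forall_reachable_mem_support [Finite V]
    {w : V → V → ℝ} (hw : ∀ u v, 0 ≤ w u v) (hsymm : ∀ u v, w u v = w v u) (hH : H.IsAcyclic)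
    {s z : V} {p : H.Walk s z} (hp : p.IsPath) :
    ∃ q : H.Walk s z, (∀ x, H.Reachable s x → x ∈ q.support) ∧
      walkWeight w q + walkWeight w p ≤ 2 * graphWeight w hsymm H := by
  induction H using WellFoundedLT.induction with
  | _ H ih =>
    by_cases hcov : ∀ x, H.Reachable s x → x ∈ p.support
    · refine ⟨p, hcov, ?_⟩
      linarith [hp.isTrail.walkWeight_le_graphWeight hsymm hw]
    push Not at hcov
    obtain ⟨x, hx, hxp⟩ := hcov
    obtain ⟨u, y, hu, hup, hyu, hleaf⟩ := hH.exists_leaf_notMem_support hp hx hxp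
    have hsu : s ≠ u := fun h => hup (h ▸ p.start_mem_support)
    -- remove the leaf edge `yu`, cover the rest by induction, then add the detour `y → u → y`
    have hpu : ∀ e ∈ p.edges, e ∉ ({s(y, u)} : Set (Sym2 V)) := fun e he he' =>
      hup (p.snd_mem_support_of_mem_edges (Set.mem_singleton_iff.1 he' ▸ he))
    have hlt : H.deleteEdges {s(y, u)} < H :=
      lt_of_le_of_ne (deleteEdges_le _) fun h => by
        simpa using (h.symm ▸ hyu : (H.deleteEdges {s(y, u)}).Adj y u)
    obtain ⟨q, hq, hqw⟩ := ih _ hlt (hH.anti (deleteEdges_le _)) (hp.toDeleteEdges _ _ hpu)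
    have hyq : y ∈ (q.mapLe (deleteEdges_le _)).support := by
      simpa using hq y (reachable_deleteEdges_of_forall_adj_eq hleaf (hu.trans hyu.symm.reachable)
        hsu hyu.ne)
    obtain ⟨q', hqq', huq', hq'w⟩ := (q.mapLe (deleteEdges_le _)).exists_detour w hyq hyu
    refine ⟨q', fun x hx => ?_, ?_⟩
    · by_cases hxu : x = u
      · exact hxu ▸ huq'
      · exact hqq' x (by simpa using hq x (reachable_deleteEdges_of_forall_adj_eq hleaf hx hsu hxu))
    · have := graphWeight_deleteEdges_add hsymm (H.mem_edgeSet.2 hyu)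
      simp only [walkWeight_mapLe, walkWeight_transfer, edgeWeight_mk] at hq'w hqw this
      linarith [hsymm u y]

end cover

lemma SimpleGraph.Walk.exists_eq_append_cons_of_mem_of_notMem {V : Type*} {G : SimpleGraph V}
    {S : Set V} {a b : V} (p : G.Walk a b) (ha : a ∈ S) (hb : b ∉ S) :
    ∃ (u v : V) (huv : G.Adj u v) (q₁ : G.Walk a u) (q₂ : G.Walk v b),
      u ∈ S ∧ v ∉ S ∧ p = q₁.append (Walk.cons huv q₂) := by
  induction p with
  | nil => exact absurd ha hb
  | @cons a c b hac p ih =>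
    by_cases hc : c ∈ S
    · obtain ⟨u, v, huv, q₁, q₂, hu, hv, rfl⟩ := ih hc hb
      exact ⟨u, v, huv, cons hac q₁, q₂, hu, hv, rfl⟩
    · exact ⟨a, c, hac, nil, p, ha, hc, rfl⟩

section dijkstra

variable {V : Type*} {G : SimpleGraph V} {w : V → V → ℝ}

noncomputable def setDist (G : SimpleGraph V) (w : V → V → ℝ) (A : Set V) (b : V) : ℝ≥0∞ :=
  ⨅ z ∈ A, spDist G w z b

lemma setDist_le_walkWeight {A : Set V} {z b : V} (hz : z ∈ A) (q : G.Walk z b) :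
    setDist G w A b ≤ ENNReal.ofReal (walkWeight w q) :=
  (iInf₂_le z hz).trans (iInf_le _ q)

lemma le_setDist_of_forall_adj (hw : ∀ u v, 0 ≤ w u v) {A S : Set V} (hAS : A ⊆ S) {c : ℝ≥0∞}
    (hc : ∀ a b, G.Adj a b → a ∈ S → b ∉ S → c ≤ setDist G w A a + ENNReal.ofReal (w a b))
    {v : V} (hv : v ∉ S) : c ≤ setDist G w A v := by
  refine le_iInf₂ fun z hz => le_iInf fun q => ?_
  obtain ⟨a, b, hab, q₁, q₂, ha, hb, rfl⟩ := q.exists_eq_append_cons_of_mem_of_notMem (hAS hz) hv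
  calc c ≤ setDist G w A a + ENNReal.ofReal (w a b) := hc a b hab ha hb
    _ ≤ ENNReal.ofReal (walkWeight w q₁) + ENNReal.ofReal (w a b) :=
        add_le_add_left (setDist_le_walkWeight hz q₁) _
    _ = ENNReal.ofReal (walkWeight w q₁ + w a b) :=
        (ENNReal.ofReal_add (walkWeight_nonneg w hw q₁) (hw a b)).symm
    _ ≤ ENNReal.ofReal (walkWeight w (q₁.append (Walk.cons hab q₂))) := by
        gcongr
        simp only [walkWeight_append, walkWeight_cons]
        linarith [walkWeight_nonneg w hw q₂]

lemma SimpleGraph.reachable_sup_edge_iff {T : SimpleGraph V} {s u v : V}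
    (hT : ∀ ⦃a b⦄, T.Adj a b → T.Reachable s a) (hu : T.Reachable s u) {x : V} :
    (T ⊔ edge u v).Reachable s x ↔ T.Reachable s x ∨ x = v := by
  refine ⟨fun ⟨p⟩ => ?_, ?_⟩
  · suffices ∀ {a x} (p : (T ⊔ edge u v).Walk a x), T.Reachable s a ∨ a = v →
        T.Reachable s x ∨ x = v from this p (.inl .rfl)
    intro a x p ha
    induction p with
    | nil => exact ha
    | @cons a c x hac p ih =>
      refine ih ?_
      rcases hac with hac | hac
      · exact .inl ((hT hac).trans hac.reachable)
      · rcases (edge_adj ..).1 hac with ⟨⟨rfl, rfl⟩ | ⟨rfl, rfl⟩, -⟩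
        exacts [.inr rfl, .inl hu]
  · rintro (hx | rfl)
    · exact hx.mono le_sup_left
    · obtain rfl | hne := eq_or_ne u x
      · exact hu.mono le_sup_left
      · exact (hu.mono le_sup_left).trans
          (Adj.reachable (.inr ((edge_adj ..).2 ⟨.inl ⟨rfl, rfl⟩, hne⟩)))

structure IsDijkstraTree (G : SimpleGraph V) (w : V → V → ℝ) (T₀ : SimpleGraph V) (s : V)
    (T : SimpleGraph V) : Prop where
  base_le : T₀ ≤ T
  le_graph : T ≤ G
  isAcyclic : T.IsAcyclic
  reachable_of_adj : ∀ ⦃a b⦄, T.Adj a b → T.Reachable s a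
  exists_walk : ∀ b, T.Reachable s b → ∃ z, T₀.Reachable s z ∧ ∃ r : T.Walk z b,
    ENNReal.ofReal (walkWeight w r) ≤ setDist G w {z | T₀.Reachable s z} b

namespace IsDijkstraTree

variable {T₀ T : SimpleGraph V} {s : V}

lemma base (hG : T₀ ≤ G) (hT₀ : T₀.IsAcyclic) (h : ∀ ⦃a b⦄, T₀.Adj a b → T₀.Reachable s a) :
    IsDijkstraTree G w T₀ s T₀ :=
  ⟨le_rfl, hG, hT₀, h, fun b hb => ⟨b, hb, .nil, by simp⟩⟩

lemma sup_edge (hT : IsDijkstraTree G w T₀ s T) (hw : ∀ u v, 0 ≤ w u v) {u v : V}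
    (huv : G.Adj u v) (hu : T.Reachable s u) (hv : ¬T.Reachable s v)
    (hmin : ∀ a b, G.Adj a b → T.Reachable s a → ¬T.Reachable s b →
      setDist G w {z | T₀.Reachable s z} u + ENNReal.ofReal (w u v) ≤
        setDist G w {z | T₀.Reachable s z} a + ENNReal.ofReal (w a b)) :
    IsDijkstraTree G w T₀ s (T ⊔ edge u v) where
  base_le := hT.base_le.trans le_sup_left
  le_graph := sup_le hT.le_graph ((edge_le_iff _).2 (.inr huv))
  isAcyclic := hT.isAcyclic.sup_edge_of_not_reachable fun h => hv (hu.trans h)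
  reachable_of_adj := by
    rintro a b (hab | hab)
    · exact (hT.reachable_of_adj hab).mono le_sup_left
    · rcases (edge_adj ..).1 hab with ⟨⟨rfl, rfl⟩ | ⟨rfl, rfl⟩, -⟩
      · exact hu.mono le_sup_left
      · exact (reachable_sup_edge_iff hT.reachable_of_adj hu).2 (.inr rfl)
  exists_walk b hb := by
    rcases (reachable_sup_edge_iff hT.reachable_of_adj hu).1 hb with hb | rfl
    · obtain ⟨z, hz, r, hr⟩ := hT.exists_walk b hb
      exact ⟨z, hz, r.mapLe le_sup_left, by simpa using hr⟩
    · obtain ⟨z, hz, r, hr⟩ := hT.exists_walk u hu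
      refine ⟨z, hz, (r.mapLe le_sup_left).concat
        (.inr ((edge_adj ..).2 ⟨.inl ⟨rfl, rfl⟩, huv.ne⟩)), ?_⟩
      calc ENNReal.ofReal (walkWeight w ((r.mapLe le_sup_left).concat _))
          = ENNReal.ofReal (walkWeight w r + w u b) := by simp
        _ ≤ ENNReal.ofReal (walkWeight w r) + ENNReal.ofReal (w u b) := ofReal_add_le
        _ ≤ setDist G w {z | T₀.Reachable s z} u + ENNReal.ofReal (w u b) := by gcongr
        _ ≤ setDist G w {z | T₀.Reachable s z} b :=
          le_setDist_of_forall_adj hw (fun _ hz => hz.mono hT.base_le) hmin hv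

lemma exists_gt [Finite V] (hT : IsDijkstraTree G w T₀ s T) (hw : ∀ u v, 0 ≤ w u v)
    (hG : G.Connected) {x : V} (hx : ¬T.Reachable s x) :
    ∃ T', T < T' ∧ IsDijkstraTree G w T₀ s T' := by
  obtain ⟨p⟩ := hG.preconnected s x
  obtain ⟨a, b, hab, -, -, ha, hb, -⟩ :=
    p.exists_eq_append_cons_of_mem_of_notMem (S := {x | T.Reachable s x}) .rfl hx
  -- Dijkstra's rule: add the boundary edge minimizing the tentative distance of its far end
  obtain ⟨⟨u, v⟩, ⟨huv, hu, hv⟩, hmin⟩ :=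
    Set.exists_min_image {d : V × V | G.Adj d.1 d.2 ∧ T.Reachable s d.1 ∧ ¬T.Reachable s d.2}
      (fun d => setDist G w {z | T₀.Reachable s z} d.1 + ENNReal.ofReal (w d.1 d.2))
      (Set.toFinite _) ⟨(a, b), hab, ha, hb⟩
  exact ⟨T ⊔ edge u v, lt_sup_edge _ _ _ huv.ne fun h => hv (hu.trans h.reachable),
    hT.sup_edge hw huv hu hv fun a b hab ha hb => hmin (a, b) ⟨hab, ha, hb⟩⟩

lemma exists_isTree [Finite V] (hw : ∀ u v, 0 ≤ w u v) (hG : G.Connected)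
    (h₀ : IsDijkstraTree G w T₀ s T₀) : ∃ T, T.IsTree ∧ IsDijkstraTree G w T₀ s T := by
  obtain ⟨T, -, hT⟩ := (Set.toFinite {T | IsDijkstraTree G w T₀ s T}).exists_le_maximal h₀
  have hreach : ∀ x, T.Reachable s x := fun x => by_contra fun hx =>
    have ⟨_, hTT', hT'⟩ := hT.prop.exists_gt hw hG hx
    hTT'.not_ge (hT.2 hT' hTT'.le)
  exact ⟨T, ⟨(connected_iff_exists_forall_reachable T).2 ⟨s, hreach⟩, hT.prop.isAcyclic⟩, hT.prop⟩

end IsDijkstraTree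

end dijkstra

lemma SimpleGraph.IsTree.ncard_edgeSet {V : Type*} [Fintype V] {T : SimpleGraph V}
    (hT : T.IsTree) : T.edgeSet.ncard = Fintype.card V - 1 := by
  classical
  have := hT.card_edgeFinset
  rw [← coe_edgeFinset, Set.ncard_coe_finset]
  omega

section stretch

variable {V : Type*} {w : V → V → ℝ} {k : ℕ} {R : Fin k → Set V} {s t : V}

lemma graphWeight_le_walkWeight_of_isGroupSteiner [Finite V] (hw : ∀ u v, 0 ≤ w u v)
    (hsymm : ∀ u v, w u v = w v u) {G H₀ : SimpleGraph V}
    (hmin : ∀ H ≤ G, ReachesGroups R s H → graphWeight w hsymm H₀ ≤ graphWeight w hsymm H)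
    {p : G.Walk s t} (hp : IsGroupSteiner R p) : graphWeight w hsymm H₀ ≤ walkWeight w p := by
  have hpE : ∀ e ∈ p.edges, e ∈ (fromEdgeSet p.edgeSet).edgeSet := fun e he => by
    simpa [Walk.edgeSet] using ⟨he, G.not_isDiag_of_mem_edgeSet (p.edges_subset_edgeSet he)⟩
  refine (hmin _ ?_ ?_).trans (graphWeight_fromEdgeSet_le hsymm hw p)
  · exact (fromEdgeSet_le _).2 fun e he => p.edges_subset_edgeSet he.1
  · exact IsGroupSteiner.reachesGroups (p := p.transfer _ hpE) (by simpa [IsGroupSteiner] using hp)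

lemma gsDist_le_mul_of_forall_exists {G H : SimpleGraph V} {c : ℝ≥0} (hc : c ≠ 0)
    (h : ∀ p : G.Walk s t, IsGroupSteiner R p →
      ∃ q : H.Walk s t, IsGroupSteiner R q ∧ walkWeight w q ≤ c * walkWeight w p) :
    gsDist H w R s t ≤ c * gsDist G w R s t := by
  rw [gsDist, gsDist, ENNReal.mul_iInf_of_ne (by simpa using hc) ENNReal.coe_ne_top]
  refine le_iInf fun ⟨p, hp⟩ => ?_
  obtain ⟨q, hq, hqp⟩ := h p hp
  calc gsDist H w R s t ≤ ENNReal.ofReal (walkWeight w q) := iInf_le_of_le ⟨q, hq⟩ le_rfl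
    _ ≤ ENNReal.ofReal (c * walkWeight w p) := ENNReal.ofReal_le_ofReal hqp
    _ = c * ENNReal.ofReal (walkWeight w p) := by
      rw [ENNReal.ofReal_mul c.coe_nonneg, ENNReal.ofReal_coe_nnreal]

end stretch

/-- For every source `s` there is a spanning tree of `G` (hence a
subgraph with exactly `n-1` edges) that is a single-source group Steiner spanner with
source `s` and stretch `3`. -/
theorem stmt_15 {V : Type*} [Fintype V] (G : SimpleGraph V) (hconn : G.Connected)
    (w : V → V → ℝ) (hw : ∀ u v, 0 ≤ w u v) (hsymm : ∀ u v, w u v = w v u)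
    {k : ℕ} (R : Fin k → Set V) (hR : ∀ i, (R i).Nonempty)
    (s : V) :
    ∃ T : SimpleGraph V, T ≤ G ∧ T.IsTree ∧ T.edgeSet.ncard = Fintype.card V - 1 ∧
      ∀ t : V, gsDist T w R s t ≤ 3 * gsDist G w R s t := by
  obtain ⟨H₀, hH₀G, hH₀, hH₀min⟩ :=
    exists_minimal_reachesGroups hw hsymm (hconn.reachesGroups (s := s) hR)
  have hH₀acyc := isAcyclic_of_minimal_reachesGroups hH₀
  obtain ⟨T, hT, hTD⟩ := IsDijkstraTree.exists_isTree hw hconn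
    (IsDijkstraTree.base hH₀G hH₀acyc fun _ _ => reachable_of_adj_of_minimal_reachesGroups hH₀)
  refine ⟨T, hTD.le_graph, hT, hT.ncard_edgeSet, fun t => ?_⟩
  refine gsDist_le_mul_of_forall_exists (c := 3) three_ne_zero fun p hp => ?_
  obtain ⟨z, hz, r, hr⟩ := hTD.exists_walk t (hT.connected.preconnected s t)
  obtain ⟨pz, hpz⟩ := hz.exists_isPath
  obtain ⟨c, hc, hcw⟩ := hH₀acyc.exists_walk_forall_reachable_mem_support hw hsymm hpz
  have hH₀p := graphWeight_le_walkWeight_of_isGroupSteiner hw hsymm hH₀min hp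
  have hrp : walkWeight w r ≤ walkWeight w p := (ENNReal.ofReal_le_ofReal_iff
    (walkWeight_nonneg w hw p)).1 (hr.trans (setDist_le_walkWeight .rfl p))
  refine ⟨(c.mapLe hTD.base_le).append r, fun i => ?_, ?_⟩
  · obtain ⟨x, hx, hsx⟩ := hH₀.prop i
    exact ⟨x, hx, by simp [hc x hsx]⟩
  · simp only [walkWeight_append, walkWeight_mapLe]
    push_cast
    linarith [walkWeight_nonneg w hw pz]
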